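/- An eventually dendric shift space is minimal if and only if it is irreducible. -/

import Mathlib

/-- `L` is factorial: factors of its elements belong to it. -/
def Factorial {A : Type*} (L : Set (List A)) : Prop :=
  ∀ u v : List A, u ++ v ∈ L → u ∈ L ∧ v ∈ L

/-- `L` is (bi)extendable: every word extends by a letter on both sides. -/
def Extendable {A : Type*} (L : Set (List A)) : Prop :=
  ∀ w ∈ L, ∃ a b : A, a :: (w ++ [b]) ∈ L

/-- number of one-letter left extensions `ℓ(w)`. -/
noncomputable def lcount {A : Type*} (L : Set (List A)) (w : List A) : ℕ :=
  Set.ncard {a : A | a :: w ∈ L}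

/-- number of one-letter right extensions `r(w)`. -/
noncomputable def rcount {A : Type*} (L : Set (List A)) (w : List A) : ℕ :=
  Set.ncard {b : A | w ++ [b] ∈ L}

/-- number of one-letter bi-extensions `e(w)`. -/
noncomputable def ecount {A : Type*} (L : Set (List A)) (w : List A) : ℕ :=
  Set.ncard {p : A × A | p.1 :: (w ++ [p.2]) ∈ L}
/-- The extension graph `E₁(w)`: bipartite graph on `L₁(w) ⊔ R₁(w)` with
edges the pairs `(a,b)` such that `awb ∈ L`. -/
def extGraph {A : Type*} (L : Set (List A)) (w : List A) :
    SimpleGraph ({a : A // a :: w ∈ L} ⊕ {b : A // w ++ [b] ∈ L}) where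
  Adj x y :=
    match x, y with
    | Sum.inl a, Sum.inr b => a.1 :: (w ++ [b.1]) ∈ L
    | Sum.inr b, Sum.inl a => a.1 :: (w ++ [b.1]) ∈ L
    | _, _ => False
  symm := ⟨by rintro (a | b) (c | d) h <;> first | exact h | exact h.elim⟩
  loopless := ⟨by rintro (a | b) h <;> exact h.elim⟩

/-- `L` is eventually dendric with threshold `m`. -/
def EvDendricWith {A : Type*} (L : Set (List A)) (m : ℕ) : Prop :=
  ∀ w ∈ L, m ≤ w.length → (extGraph L w).IsTree

/-- `L` is eventually dendric. -/
def EvDendric {A : Type*} (L : Set (List A)) : Prop :=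
  ∃ m, EvDendricWith L m

/-!
Uniform recurrence gives irreducibility: extend `v` to the left until it is long enough to
contain `u`.

Conversely, fix `z ∈ L`. Beyond the dendric threshold the extension graph of `w` is a tree, so
`e(w) = ℓ(w) + r(w) - 1`, that is `∑ₐ (r(aw) - 1) = r(w) - 1`. Hence the total excess
`∑ (r(u) - 1)` over the words `u` of length `n` avoiding `z` is eventually non-increasing in `n`,
and passing from `n` to `n + 1` it drops at least by the excess of the words in which `z` occurs
only at the start. So long words of that kind have a unique right extension. By irreducibility a
prefix `V` of such a word continues as some `V s z ∈ L`, and uniqueness forces every long enough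
word starting with `V` in which `z` occurs only at the start to contain this second `z`: such
words have bounded length `B`. Finally, in `z s y ∈ L` the last occurrence of `z` starts a word of
length `< B`, so `z` is a factor of every `y ∈ L` of length at least `B`.
-/

namespace Factorial

variable {A : Type*} {L : Set (List A)}

lemma mem_of_infix (hfac : Factorial L) {u v : List A} (h : u <:+: v) (hv : v ∈ L) : u ∈ L := by
  obtain ⟨s, t, rfl⟩ := h
  exact (hfac s u (hfac _ t hv).1).2

lemma mem_of_prefix (hfac : Factorial L) {u v : List A} (h : u <+: v) (hv : v ∈ L) : u ∈ L :=
  hfac.mem_of_infix h.isInfix hv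

lemma mem_of_suffix (hfac : Factorial L) {u v : List A} (h : u <:+ v) (hv : v ∈ L) : u ∈ L :=
  hfac.mem_of_infix h.isInfix hv

end Factorial

section ExtensionCounts

variable {A : Type*} {L : Set (List A)}

lemma rcount_eq_zero_of_notMem (hfac : Factorial L) {w : List A} (hw : w ∉ L) :
    rcount L w = 0 := by
  have : {b | w ++ [b] ∈ L} = ∅ := Set.eq_empty_of_forall_notMem fun b hb =>
    hw (hfac.mem_of_prefix (List.prefix_append w [b]) hb)
  rw [rcount, this, Set.ncard_empty]

lemma one_le_rcount [Finite A] (hfac : Factorial L) (hext : Extendable L) {w : List A}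
    (hw : w ∈ L) : 1 ≤ rcount L w := by
  obtain ⟨a, b, hab⟩ := hext w hw
  exact (Set.ncard_pos (Set.toFinite _)).2 ⟨b, hfac.mem_of_suffix (List.suffix_cons a _) hab⟩

lemma eq_of_rcount_le_one [Finite A] {w : List A} (h : rcount L w ≤ 1) {b c : A}
    (hb : w ++ [b] ∈ L) (hc : w ++ [c] ∈ L) : b = c :=
  (Set.ncard_le_one (Set.toFinite _)).1 h b hb c hc

lemma ecount_eq_sum_rcount_cons [Fintype A] (w : List A) :
    ecount L w = ∑ a, rcount L (a :: w) := by
  rw [ecount, ← Nat.card_coe_set_eq]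
  exact (Nat.card_congr (Equiv.subtypeProdEquivSigmaSubtype
    fun a b => a :: (w ++ [b]) ∈ L)).trans Nat.card_sigma

lemma ecount_add_one_of_isTree [Finite A] (hfac : Factorial L) {w : List A}
    (htree : (extGraph L w).IsTree) : ecount L w + 1 = lcount L w + rcount L w := by
  have hcard := (SimpleGraph.isTree_iff_connected_and_card.1 htree).2
  rw [Nat.card_sum, Nat.card_coe_set_eq] at hcard
  convert hcard using 2
  · refine Set.ncard_congr
      (fun p hp => s(.inl ⟨p.1, hfac.mem_of_prefix (List.prefix_append _ [p.2]) hp⟩,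
        .inr ⟨p.2, hfac.mem_of_suffix (List.suffix_cons _ _) hp⟩)) (fun p hp => hp) ?_ ?_
    · rintro ⟨a, b⟩ ⟨a', b'⟩ _ _ h
      simpa [Sym2.eq_iff] using h
    · intro e he
      induction e using Sym2.ind with
      | _ x y =>
        rcases x with a | b <;> rcases y with a' | b'
        · exact he.elim
        · exact ⟨(a.1, b'.1), he, rfl⟩
        · exact ⟨(a'.1, b.1), he, Sym2.eq_swap⟩
        · exact he.elim
  · exact (Nat.card_coe_set_eq _).symm
  · exact (Nat.card_coe_set_eq _).symm

lemma sum_rcount_cons_sub_one [Fintype A] (hfac : Factorial L) (hext : Extendable L) {m : ℕ}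
    (hden : EvDendricWith L m) {w : List A} (hw : m ≤ w.length) :
    ∑ a, (rcount L (a :: w) - 1) = rcount L w - 1 := by
  classical
  by_cases hwL : w ∈ L
  · have hterm (a : A) :
        rcount L (a :: w) - 1 + (if a :: w ∈ L then 1 else 0) = rcount L (a :: w) := by
      split_ifs with ha
      · have := one_le_rcount hfac hext ha
        omega
      · rw [rcount_eq_zero_of_notMem hfac ha]
    have hl : ∑ a, (if a :: w ∈ L then 1 else 0) = lcount L w := by
      rw [Finset.sum_boole, lcount, Set.ncard_eq_toFinset_card', Set.toFinset_ofPred, Nat.cast_id]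
    have htree := ecount_add_one_of_isTree hfac (hden w hwL hw)
    have := one_le_rcount hfac hext hwL
    rw [ecount_eq_sum_rcount_cons, ← Finset.sum_congr rfl fun a _ => hterm a,
      Finset.sum_add_distrib, hl] at htree
    omega
  · have (a : A) : rcount L (a :: w) = 0 :=
      rcount_eq_zero_of_notMem hfac fun ha => hwL (hfac.mem_of_suffix (List.suffix_cons a w) ha)
    simp [this, rcount_eq_zero_of_notMem hfac hwL]

end ExtensionCounts

section Words

variable {A : Type*}

def OccursOnlyAtStart (z u : List A) : Prop :=
  z <+: u ∧ ¬ z <:+: u.tail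

lemma OccursOnlyAtStart.ne_nil {z u : List A} (h : OccursOnlyAtStart z u) : z ≠ [] := by
  rintro rfl
  exact h.2 List.nil_infix

lemma OccursOnlyAtStart.of_prefix {z u v : List A} (h : OccursOnlyAtStart z v) (hzu : z <+: u)
    (huv : u <+: v) : OccursOnlyAtStart z u :=
  ⟨hzu, fun hz => h.2 (hz.trans (by simpa using (huv.drop 1).isInfix))⟩

theorem exists_suffix_occursOnlyAtStart {z w : List A} (hz : z ≠ []) (hzw : z <+: w) :
    ∃ t, t <:+ w ∧ OccursOnlyAtStart z t := by
  by_cases hw : z <:+: w.tail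
  · obtain ⟨p, q, hpq⟩ := hw
    have hq : z ++ q <:+ w.tail := ⟨p, by rw [← hpq, List.append_assoc]⟩
    have hlt : z.length + q.length < w.length := by
      have := hq.length_le
      have := hzw.length_le
      have := List.length_pos_iff.2 hz
      simp only [List.length_append, List.length_tail] at *
      omega
    obtain ⟨t, ht, hocc⟩ := exists_suffix_occursOnlyAtStart hz (List.prefix_append z q)
    exact ⟨t, ht.trans (hq.trans (List.tail_suffix w)), hocc⟩
  · exact ⟨w, List.suffix_refl w, hzw, hw⟩
termination_by w.length

def lengthSum [Fintype A] (n : ℕ) (g : List A → ℕ) : ℕ :=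
  ∑ f : Fin n → A, g (List.ofFn f)

lemma lengthSum_succ [Fintype A] (n : ℕ) (g : List A → ℕ) :
    lengthSum (n + 1) g = lengthSum n fun w => ∑ a, g (a :: w) := by
  rw [lengthSum, ← Fintype.sum_equiv (Fin.consEquiv fun _ => A)
    (fun p => g (p.1 :: List.ofFn p.2)) _ fun p => by simp [Fin.consEquiv_apply],
    Fintype.sum_prod_type, Finset.sum_comm, lengthSum]

lemma le_lengthSum [Fintype A] (g : List A → ℕ) (u : List A) :
    g u ≤ lengthSum u.length g := by
  conv_lhs => rw [← List.ofFn_get u]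
  exact Finset.single_le_sum (f := fun f => g (List.ofFn f)) (fun _ _ => Nat.zero_le _)
    (Finset.mem_univ u.get)

end Words

section Excess

variable {A : Type*} {L : Set (List A)}

open Classical in
noncomputable def avoidExcess (L : Set (List A)) (z u : List A) : ℕ :=
  if z <:+: u then 0 else rcount L u - 1

open Classical in
noncomputable def startExcess (L : Set (List A)) (z u : List A) : ℕ :=
  if OccursOnlyAtStart z u then rcount L u - 1 else 0

lemma avoidExcess_add_startExcess_le (z u : List A) :
    avoidExcess L z u + startExcess L z u ≤ rcount L u - 1 := by
  unfold avoidExcess startExcess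
  split_ifs with h₁ h₂ h₂ <;> first | omega | exact absurd h₂.1.isInfix h₁

lemma sum_avoidExcess_add_startExcess_cons_le [Fintype A] (hfac : Factorial L)
    (hext : Extendable L) {m : ℕ} (hden : EvDendricWith L m) (z : List A) {w : List A}
    (hw : m ≤ w.length) :
    ∑ a, (avoidExcess L z (a :: w) + startExcess L z (a :: w)) ≤ avoidExcess L z w := by
  by_cases hz : z <:+: w
  · have (a : A) : avoidExcess L z (a :: w) + startExcess L z (a :: w) = 0 := by
      simp [avoidExcess, startExcess, List.infix_cons hz, OccursOnlyAtStart, hz]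
    simp [this]
  · calc ∑ a, (avoidExcess L z (a :: w) + startExcess L z (a :: w))
        ≤ ∑ a, (rcount L (a :: w) - 1) :=
          Finset.sum_le_sum fun a _ => avoidExcess_add_startExcess_le z (a :: w)
      _ = avoidExcess L z w := by
          rw [sum_rcount_cons_sub_one hfac hext hden hw, avoidExcess, if_neg hz]

theorem exists_rcount_le_one_of_occursOnlyAtStart [Fintype A] (hfac : Factorial L)
    (hext : Extendable L) {m : ℕ} (hden : EvDendricWith L m) (z : List A) :
    ∃ N, ∀ u, N ≤ u.length → OccursOnlyAtStart z u → rcount L u ≤ 1 := by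
  have hstep (n : ℕ) (hn : m ≤ n) :
      lengthSum (n + 1) (avoidExcess L z) + lengthSum (n + 1) (startExcess L z) ≤
        lengthSum n (avoidExcess L z) := by
    rw [lengthSum_succ, lengthSum_succ]
    simp only [lengthSum, ← Finset.sum_add_distrib]
    exact Finset.sum_le_sum fun f _ =>
      sum_avoidExcess_add_startExcess_cons_le hfac hext hden z (by simpa using hn)
  obtain ⟨N, hN⟩ := WellFoundedLT.antitone_chain_condition (f := fun k =>
    lengthSum (m + k) (avoidExcess L z)) (antitone_nat_of_succ_le fun k =>
      le_of_add_le_left (hstep (m + k) (Nat.le_add_right m k)))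
  refine ⟨m + N + 1, fun u hu hocc => ?_⟩
  obtain ⟨n, hn⟩ : ∃ n, u.length = n + 1 := ⟨u.length - 1, by omega⟩
  have hconst : lengthSum (n + 1) (avoidExcess L z) = lengthSum n (avoidExcess L z) := by
    have h₁ := hN (n + 1 - m) (by omega)
    have h₂ := hN (n - m) (by omega)
    rw [Nat.add_sub_cancel' (by omega)] at h₁ h₂
    rw [← h₁, ← h₂]
  have hle := le_lengthSum (startExcess L z) u
  have := hstep n (by omega)
  rw [hn] at hle
  have hzero : startExcess L z u = 0 := by omega
  rw [startExcess, if_pos hocc] at hzero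
  omega

end Excess

section Recurrence

variable {A : Type*} {L : Set (List A)}

def IsUniformlyRecurrent (L : Set (List A)) : Prop :=
  ∀ w ∈ L, ∃ n : ℕ, ∀ v ∈ L, v.length = n → w <:+: v

def IsRecurrent (L : Set (List A)) : Prop :=
  ∀ u ∈ L, ∀ v ∈ L, ∃ s : List A, u ++ s ++ v ∈ L

lemma exists_length_eq_append_mem (hfac : Factorial L) (hext : Extendable L) {v : List A}
    (hv : v ∈ L) (n : ℕ) : ∃ p : List A, p.length = n ∧ p ++ v ∈ L := by
  induction n with
  | zero => exact ⟨[], rfl, hv⟩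
  | succ n ih =>
    obtain ⟨p, hp, hpv⟩ := ih
    obtain ⟨a, b, hab⟩ := hext (p ++ v) hpv
    exact ⟨a :: p, by simp [hp], hfac.mem_of_prefix (List.prefix_append _ [b]) hab⟩

theorem IsUniformlyRecurrent.isRecurrent (hfac : Factorial L) (hext : Extendable L)
    (hL : IsUniformlyRecurrent L) : IsRecurrent L := by
  intro u hu v hv
  obtain ⟨n, hn⟩ := hL u hu
  obtain ⟨p, hp, hpv⟩ := exists_length_eq_append_mem hfac hext hv n
  obtain ⟨x, y, rfl⟩ := hn p (hfac p v hpv).1 hp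
  exact ⟨y, hfac.mem_of_suffix ⟨x, by simp⟩ hpv⟩

lemma IsRecurrent.exists_length_le_append_mem [Finite A] (hL : IsRecurrent L) {z : List A}
    (hz : z ∈ L) (n : ℕ) :
    ∃ M, ∀ v ∈ L, v.length = n → ∃ s : List A, s.length ≤ M ∧ v ++ s ++ z ∈ L := by
  have : Finite {v : List A // v.length = n ∧ v ∈ L} :=
    ((List.finite_length_eq A n).subset fun _ hv => hv.1).to_subtype
  choose s hs using fun v : {v : List A // v.length = n ∧ v ∈ L} => hL v.1 v.2.2 z hz
  obtain ⟨M, hM⟩ := Finite.bddAbove_range fun v => (s v).length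
  exact ⟨M, fun v hv hn => ⟨s ⟨v, hn, hv⟩, hM ⟨_, rfl⟩, hs ⟨v, hn, hv⟩⟩⟩

lemma prefix_of_rcount_le_one [Finite A] (hfac : Factorial L) {U V P : List A} (hU : U ∈ L)
    (hVU : V <+: U) (hunique : ∀ Q, V <+: Q → Q <+: U → rcount L Q ≤ 1) (hP : P ∈ L)
    (hVP : V <+: P) (hlen : P.length ≤ U.length) : P <+: U := by
  induction P using List.reverseRecOn with
  | nil => exact List.nil_prefix
  | append_singleton P c ih =>
    rcases List.prefix_concat_iff.1 hVP with rfl | hVP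
    · exact hVU
    have hPU := ih (hfac.mem_of_prefix (List.prefix_append P [c]) hP) hVP
      (by simp at hlen; omega)
    obtain ⟨_ | ⟨d, r⟩, rfl⟩ := hPU
    · simp at hlen
    have hd : P ++ [d] ∈ L := hfac.mem_of_prefix ⟨r, by simp⟩ hU
    rw [eq_of_rcount_le_one (hunique P hVP (List.prefix_append P _)) hP hd]
    exact ⟨r, by simp⟩

theorem IsRecurrent.exists_length_bound_occursOnlyAtStart [Fintype A] (hfac : Factorial L)
    (hext : Extendable L) {m : ℕ} (hden : EvDendricWith L m) (hL : IsRecurrent L) {z : List A}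
    (hz : z ∈ L) : ∃ B, ∀ u ∈ L, OccursOnlyAtStart z u → u.length < B := by
  obtain ⟨N, hN⟩ := exists_rcount_le_one_of_occursOnlyAtStart hfac hext hden z
  set n := max N z.length
  obtain ⟨M, hM⟩ := hL.exists_length_le_append_mem hz n
  refine ⟨n + M + z.length + 1, fun U hU hocc => ?_⟩
  by_contra! hlong
  set V := U.take n
  have hVU : V <+: U := List.take_prefix n U
  have hzV : z <+: V := List.prefix_take_iff.2 ⟨hocc.1, le_max_right _ _⟩
  have hV : V ≠ [] := fun h => hocc.ne_nil (List.prefix_nil.1 (h ▸ hzV))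
  have hVlen : V.length = n := by simp only [V, List.length_take]; omega
  have hNn : N ≤ n := le_max_left _ _
  obtain ⟨s, hs, hP⟩ := hM V (hfac.mem_of_prefix hVU hU) hVlen
  have hPU : V ++ s ++ z <+: U := prefix_of_rcount_le_one hfac hU hVU
    (fun Q hVQ hQU => hN Q (by have := hVQ.length_le; omega) (hocc.of_prefix (hzV.trans hVQ) hQU))
    hP ⟨s ++ z, by simp⟩ (by simp only [List.length_append]; omega)
  have hz_tail : z <:+: (V ++ s ++ z).tail := by
    rw [List.append_assoc, List.tail_append_of_ne_nil hV]
    exact ⟨V.tail ++ s, [], by simp⟩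
  exact hocc.2 (hz_tail.trans (by simpa using (hPU.drop 1).isInfix))

lemma IsRecurrent.infix_of_length_bound (hfac : Factorial L) (hL : IsRecurrent L) {z : List A}
    (hz : z ∈ L) {B : ℕ} (hB : ∀ u ∈ L, OccursOnlyAtStart z u → u.length < B) {y : List A}
    (hy : y ∈ L) (hlen : B ≤ y.length) : z <:+: y := by
  rcases eq_or_ne z [] with rfl | hz0
  · exact List.nil_infix
  obtain ⟨s, hs⟩ := hL z hz y hy
  obtain ⟨t, ht, hocc⟩ :=
    exists_suffix_occursOnlyAtStart hz0 (⟨s ++ y, by simp⟩ : z <+: z ++ s ++ y)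
  have := hB t (hfac.mem_of_suffix ht hs) hocc
  exact hocc.1.isInfix.trans
    (List.suffix_of_suffix_length_le ht (List.suffix_append _ y) (by omega)).isInfix

theorem IsRecurrent.isUniformlyRecurrent [Fintype A] (hfac : Factorial L) (hext : Extendable L)
    {m : ℕ} (hden : EvDendricWith L m) (hL : IsRecurrent L) : IsUniformlyRecurrent L := by
  intro z hz
  obtain ⟨B, hB⟩ := hL.exists_length_bound_occursOnlyAtStart hfac hext hden hz
  exact ⟨B, fun y hy hlen => hL.infix_of_length_bound hfac hz hB hy hlen.ge⟩

end Recurrence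

theorem stmt16_general {A : Type*} [Fintype A] (L : Set (List A))
    (hfac : Factorial L) (hext : Extendable L)
    (hdendric : EvDendric L) :
    (∀ w ∈ L, ∃ n : ℕ, ∀ v ∈ L, v.length = n → w <:+: v) ↔
      (∀ u ∈ L, ∀ v ∈ L, ∃ s : List A, u ++ s ++ v ∈ L) := by
  obtain ⟨m, hden⟩ := hdendric
  exact ⟨IsUniformlyRecurrent.isRecurrent hfac hext,
    IsRecurrent.isUniformlyRecurrent hfac hext hden⟩

/-- A nonempty eventually dendric shift space is minimal (its language is
uniformly recurrent) if and only if it is irreducible (its language is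
recurrent). -/
theorem stmt16 {A : Type*} [Fintype A] (L : Set (List A))
    (hfac : Factorial L) (hext : Extendable L) (hne : L.Nonempty)
    (hdendric : EvDendric L) :
    (∀ w ∈ L, ∃ n : ℕ, ∀ v ∈ L, v.length = n → w <:+: v) ↔
      (∀ u ∈ L, ∀ v ∈ L, ∃ s : List A, u ++ s ++ v ∈ L) :=
  stmt16_general L hfac hext hdendric
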